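/- Let k be a field and φ ∈ k(X). If the derivative φ′(X) is not identically zero, then for every positive integer n, the rational function φ^n(X) − t is separable over the rational function field k(t); that is, writing φ^n(X) − t = f/g with f, g ∈ k(t)[X] coprime, the polynomial f is separable over k(t). -/

import Mathlib

open Polynomial
open scoped Classical

noncomputable section

variable {k : Type*} [Field k]

/-- The derivative `φ'` of a rational function `φ = num/denom`, given by the quotient rule. -/
noncomputable def ratDeriv (φ : RatFunc k) : RatFunc k :=
  (algebraMap (Polynomial k) (RatFunc k) (derivative φ.num) *
        algebraMap (Polynomial k) (RatFunc k) φ.denom -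
      algebraMap (Polynomial k) (RatFunc k) φ.num *
        algebraMap (Polynomial k) (RatFunc k) (derivative φ.denom)) /
    algebraMap (Polynomial k) (RatFunc k) φ.denom ^ 2

/-- Composition of rational functions: `φ ∘ ψ`. -/
noncomputable def ratComp (φ ψ : RatFunc k) : RatFunc k :=
  φ.num.eval₂ RatFunc.C ψ / φ.denom.eval₂ RatFunc.C ψ

/-- The `n`-fold composition `φ^n` of a rational function with itself (`φ^0 = X`). -/
noncomputable def ratIter (φ : RatFunc k) : ℕ → RatFunc k
  | 0 => RatFunc.X
  | n + 1 => ratComp φ (ratIter φ n)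

/-- The polynomial `φ^n(X) - t` regarded as a polynomial in `X` with coefficients in the
rational function field `k(t)` (here `t` is `RatFunc.X`): writing `φ^n = u/v` with `u,v`
coprime, this is the (coprime) numerator `u(X) - t·v(X)` of `φ^n(X) - t`. -/
noncomputable def iterMinusT (φ : RatFunc k) (n : ℕ) : Polynomial (RatFunc k) :=
  ((ratIter φ n).num).map (RatFunc.C : k →+* RatFunc k) -
    Polynomial.C RatFunc.X * ((ratIter φ n).denom).map (RatFunc.C : k →+* RatFunc k)

end

/-!
Since `φ' ≠ 0`, `φ` is nonconstant, hence transcendental over `k`, and the chain rule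
`(φ ∘ ψ)' = φ'(ψ) · ψ'` shows inductively that `(φ^n)' ≠ 0`. Writing `φ^n = u/v` in lowest terms,
this says that the Wronskian `u'v - uv' ∈ k[X]` is nonzero. A common root `α` of `u - t v` and of
its derivative `u' - t v'` cannot be a root of `v` (it would also be a root of `u`), so it is a root
of the Wronskian and thus algebraic over `k`; but then so is `t = u(α)/v(α)`, which is absurd.
-/

namespace RatFunc

variable {k : Type*} [Field k]

theorem ratDeriv_div_algebraMap {p q : k[X]} (hq : q ≠ 0) :
    ratDeriv (algebraMap _ (RatFunc k) p / algebraMap _ _ q) =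
      (algebraMap _ _ (derivative p) * algebraMap _ _ q -
          algebraMap _ _ p * algebraMap _ _ (derivative q)) / algebraMap _ (RatFunc k) q ^ 2 := by
  set x := algebraMap _ (RatFunc k) p / algebraMap _ _ q
  have hcross : x.num * q = p * x.denom := (num_mul_eq_mul_denom_iff hq).mpr rfl
  have hcross' := congrArg derivative hcross
  rw [derivative_mul, derivative_mul] at hcross'
  rw [ratDeriv, div_eq_div_iff (pow_ne_zero 2 (algebraMap_ne_zero x.denom_ne_zero))
    (pow_ne_zero 2 (algebraMap_ne_zero hq))]
  simp only [← map_pow, ← map_mul, ← map_sub]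
  congr 1
  linear_combination (x.denom * q) * hcross' -
    (derivative x.denom * q + x.denom * derivative q) * hcross

theorem exists_eq_div_algebraMap (x : RatFunc k) :
    ∃ p q : k[X], q ≠ 0 ∧ x = algebraMap _ _ p / algebraMap _ _ q :=
  ⟨x.num, x.denom, x.denom_ne_zero, x.num_div_denom.symm⟩

theorem ratDeriv_add (x y : RatFunc k) : ratDeriv (x + y) = ratDeriv x + ratDeriv y := by
  obtain ⟨p, q, hq, rfl⟩ := exists_eq_div_algebraMap x
  obtain ⟨r, s, hs, rfl⟩ := exists_eq_div_algebraMap y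
  have hq' := algebraMap_ne_zero hq
  have hs' := algebraMap_ne_zero hs
  have hsum : algebraMap _ (RatFunc k) p / algebraMap _ _ q + algebraMap _ _ r / algebraMap _ _ s =
      algebraMap _ _ (p * s + r * q) / algebraMap _ _ (q * s) := by
    simp only [map_add, map_mul]
    field_simp
  rw [hsum, ratDeriv_div_algebraMap (mul_ne_zero hq hs), ratDeriv_div_algebraMap hq,
    ratDeriv_div_algebraMap hs]
  simp only [derivative_mul, map_add, map_mul]
  field_simp
  ring

theorem ratDeriv_mul (x y : RatFunc k) : ratDeriv (x * y) = x * ratDeriv y + y * ratDeriv x := by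
  obtain ⟨p, q, hq, rfl⟩ := exists_eq_div_algebraMap x
  obtain ⟨r, s, hs, rfl⟩ := exists_eq_div_algebraMap y
  have hq' := algebraMap_ne_zero hq
  have hs' := algebraMap_ne_zero hs
  have hprod : algebraMap _ (RatFunc k) p / algebraMap _ _ q * (algebraMap _ _ r / algebraMap _ _ s) =
      algebraMap _ _ (p * r) / algebraMap _ _ (q * s) := by
    simp only [map_mul]
    field_simp
  rw [hprod, ratDeriv_div_algebraMap (mul_ne_zero hq hs), ratDeriv_div_algebraMap hq,
    ratDeriv_div_algebraMap hs]
  simp only [derivative_mul, map_add, map_mul]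
  field_simp
  ring

theorem ratDeriv_algebraMap (p : k[X]) :
    ratDeriv (algebraMap _ (RatFunc k) p) = algebraMap _ _ (derivative p) := by
  simpa using ratDeriv_div_algebraMap (p := p) one_ne_zero

theorem ratDeriv_C (c : k) : ratDeriv (C c) = 0 := by
  rw [← algebraMap_C, ratDeriv_algebraMap, derivative_C, map_zero]

noncomputable def ratDerivation : Derivation k (RatFunc k) (RatFunc k) :=
  Derivation.mk'
    { toFun := ratDeriv
      map_add' := ratDeriv_add
      map_smul' := fun c x => by
        rw [Algebra.smul_def, ratDeriv_mul, algebraMap_eq_C, ratDeriv_C, mul_zero, add_zero,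
          RingHom.id_apply, Algebra.smul_def, algebraMap_eq_C] }
    (fun x y => by rw [LinearMap.coe_mk, AddHom.coe_mk, ratDeriv_mul, smul_eq_mul, smul_eq_mul])

@[simp]
theorem ratDerivation_apply (x : RatFunc k) : ratDerivation x = ratDeriv x := rfl

theorem ratDeriv_X : ratDeriv (X : RatFunc k) = 1 := by
  rw [← algebraMap_X, ratDeriv_algebraMap, derivative_X, map_one]

theorem ratDeriv_ne_zero_iff {φ : RatFunc k} :
    ratDeriv φ ≠ 0 ↔ derivative φ.num * φ.denom - φ.num * derivative φ.denom ≠ 0 := by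
  rw [ratDeriv, ← map_mul, ← map_mul, ← map_sub, div_ne_zero_iff, ne_eq, ne_eq,
    map_eq_zero_iff _ (algebraMap_injective k)]
  exact and_iff_left (pow_ne_zero 2 (algebraMap_ne_zero φ.denom_ne_zero))

theorem transcendental_of_ratDeriv_ne_zero {φ : RatFunc k} (h : ratDeriv φ ≠ 0) :
    Transcendental k φ :=
  transcendental_of_ne_C φ (by rintro ⟨c, rfl⟩; exact h (ratDeriv_C c))

theorem ratComp_eq_aeval (φ ψ : RatFunc k) :
    ratComp φ ψ = aeval ψ φ.num / aeval ψ φ.denom := by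
  rw [ratComp, aeval_def, aeval_def, algebraMap_eq_C]

theorem ratDeriv_ratComp (φ ψ : RatFunc k) :
    ratDeriv (ratComp φ ψ) =
      aeval ψ (derivative φ.num * φ.denom - φ.num * derivative φ.denom) /
        aeval ψ φ.denom ^ 2 * ratDeriv ψ := by
  rw [ratComp_eq_aeval, ← ratDerivation_apply, Derivation.leibniz_div,
    Derivation.map_aeval, Derivation.map_aeval]
  simp only [ratDerivation_apply, smul_eq_mul, map_sub, map_mul]
  ring

theorem ratDeriv_ratComp_ne_zero {φ ψ : RatFunc k} (hφ : ratDeriv φ ≠ 0) (hψ : ratDeriv ψ ≠ 0) :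
    ratDeriv (ratComp φ ψ) ≠ 0 := by
  have hψ_tr := transcendental_of_ratDeriv_ne_zero hψ
  rw [ratDeriv_ratComp]
  refine mul_ne_zero (div_ne_zero ?_ (pow_ne_zero 2 ?_)) hψ
  · exact fun h => hψ_tr ⟨_, ratDeriv_ne_zero_iff.mp hφ, h⟩
  · exact fun h => hψ_tr ⟨_, φ.denom_ne_zero, h⟩

theorem ratDeriv_ratIter_ne_zero {φ : RatFunc k} (hφ : ratDeriv φ ≠ 0) (n : ℕ) :
    ratDeriv (ratIter φ n) ≠ 0 := by
  induction n with
  | zero => simp [ratIter, ratDeriv_X]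
  | succ n ih => exact ratDeriv_ratComp_ne_zero hφ ih

end RatFunc

section Separable

variable {k F : Type*} [Field k] [Field F] [Algebra k F]

theorem IsAlgebraic.aeval_div_aeval {α : F} (hα : IsAlgebraic k α) (p q : k[X]) :
    IsAlgebraic k (aeval α p / aeval α q) :=
  IntermediateField.isAlgebraic_iff.mp <|
    (IntermediateField.isAlgebraic_adjoin_simple hα.isIntegral).isAlgebraic
      ⟨_, (IntermediateField.mem_adjoin_simple_iff k _).mpr ⟨p, q, rfl⟩⟩

theorem isAlgebraic_of_aeval_eq_mul_of_aeval_derivative_eq_mul {u v : k[X]} (huv : IsCoprime u v)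
    (hW : derivative u * v - u * derivative v ≠ 0) {α T : F}
    (hu : aeval α u = T * aeval α v) (hu' : aeval α (derivative u) = T * aeval α (derivative v)) :
    IsAlgebraic k T := by
  have hv : aeval α v ≠ 0 := by
    intro hv
    have h := huv.map (aeval α).toRingHom
    simp only [AlgHom.toRingHom_eq_coe, RingHom.coe_coe, hu, hv, mul_zero] at h
    exact not_isCoprime_zero_zero h
  have hα : IsAlgebraic k α := ⟨_, hW, by simp only [map_sub, map_mul, hu, hu']; ring⟩
  rw [eq_div_of_mul_eq hv hu.symm]
  exact hα.aeval_div_aeval u v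

theorem Polynomial.separable_map_sub_C_mul_map {K : Type*} [Field K] [Algebra k K] {u v : k[X]}
    (huv : IsCoprime u v) (hW : derivative u * v - u * derivative v ≠ 0) {t : K}
    (ht : Transcendental k t) :
    (u.map (algebraMap k K) - C t * v.map (algebraMap k K)).Separable := by
  rw [separable_def, derivative_sub, derivative_C_mul, derivative_map, derivative_map]
  refine (isCoprime_iff_aeval_ne_zero_of_isAlgClosed K (AlgebraicClosure K) _ _).mpr fun α => ?_
  by_contra! h
  simp only [map_sub, map_mul, aeval_C, aeval_map_algebraMap, sub_eq_zero] at h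
  have ht' : Transcendental k (algebraMap K (AlgebraicClosure K) t) :=
    (transcendental_algebraMap_iff (algebraMap K _).injective).mpr ht
  exact ht' (isAlgebraic_of_aeval_eq_mul_of_aeval_derivative_eq_mul huv hW h.1 h.2)

end Separable

theorem iterMinusT_separable_general {k : Type*} [Field k] (φ : RatFunc k)
    (hder : ratDeriv φ ≠ 0) (n : ℕ) :
    (iterMinusT φ n).Separable := by
  rw [iterMinusT, ← RatFunc.algebraMap_eq_C]
  exact separable_map_sub_C_mul_map (RatFunc.isCoprime_num_denom _)
    (RatFunc.ratDeriv_ne_zero_iff.mp (RatFunc.ratDeriv_ratIter_ne_zero hder n))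
    RatFunc.transcendental_X

/-- If `φ'(X) ≠ 0`, then for every positive integer `n` the rational function `φ^n(X) - t`
is separable over `k(t)`; i.e. its coprime numerator is a separable polynomial. -/
theorem iterMinusT_separable {k : Type*} [Field k] (φ : RatFunc k)
    (hder : ratDeriv φ ≠ 0) (n : ℕ) (hn : 1 ≤ n) :
    (iterMinusT φ n).Separable :=
  iterMinusT_separable_general φ hder n
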